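/- For every positive integer k, J_k C_k^{-1} = 2^k J_k, where J_k is the all-ones 2^k × 2^k matrix. -/
import Mathlib


open Matrix

/-- All-ones matrix of size `2^k × 2^k`. -/
def Jmat (k : ℕ) : Matrix (Fin (2^k)) (Fin (2^k)) ℝ := Matrix.of fun _ _ => 1

/-- The recursively defined correlation matrices: `Cmat 1 = [[1,-1/2],[-1/2,1]]` and
`Cmat (k+1) = [[Cmat k, -J_k/2^(2k+1)], [-J_k/2^(2k+1), Cmat k]]`.  (`Cmat 0` is the
`1×1` matrix `[1]`, which makes the recursion start correctly at `k = 1`.) -/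
noncomputable def Cmat : (k : ℕ) → Matrix (Fin (2^k)) (Fin (2^k)) ℝ
  | 0 => Matrix.of fun _ _ => 1
  | (k+1) =>
      Matrix.reindex (finSumFinEquiv.trans (finCongr (by ring : 2^k + 2^k = 2^(k+1)))) (finSumFinEquiv.trans (finCongr (by ring : 2^k + 2^k = 2^(k+1))))
        (Matrix.fromBlocks (Cmat k) (-((1:ℝ)/2^(2*k+1)) • Jmat k)
          (-((1:ℝ)/2^(2*k+1)) • Jmat k) (Cmat k))

/-- the reindexing equivalence -/
def eqv (k : ℕ) : Fin (2^k) ⊕ Fin (2^k) ≃ Fin (2^(k+1)) :=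
  finSumFinEquiv.trans (finCongr (by ring : 2^k + 2^k = 2^(k+1)))

noncomputable def Dmat : (k : ℕ) → Matrix (Fin (2^k)) (Fin (2^k)) ℝ
  | 0 => Matrix.of fun _ _ => 1
  | (k+1) =>
      Matrix.reindex (eqv k) (eqv k)
        (Matrix.fromBlocks (Dmat k + ((1:ℝ)/3) • Jmat k) (((2:ℝ)/3) • Jmat k)
          (((2:ℝ)/3) • Jmat k) (Dmat k + ((1:ℝ)/3) • Jmat k))

lemma Cmat_succ (k : ℕ) : Cmat (k+1) =
    Matrix.reindex (eqv k) (eqv k)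
      (Matrix.fromBlocks (Cmat k) (-((1:ℝ)/2^(2*k+1)) • Jmat k)
        (-((1:ℝ)/2^(2*k+1)) • Jmat k) (Cmat k)) := rfl

lemma Jmat_succ (k : ℕ) : Jmat (k+1) =
    Matrix.reindex (eqv k) (eqv k)
      (Matrix.fromBlocks (Jmat k) (Jmat k) (Jmat k) (Jmat k)) := by
  ext i j
  rcases h1 : (eqv k).symm i with a | a <;> rcases h2 : (eqv k).symm j with b | b <;>
    simp [Jmat, Matrix.reindex_apply, Matrix.submatrix_apply, h1, h2, Matrix.fromBlocks]

lemma reindex_mul {k : ℕ} (M N : Matrix (Fin (2^k) ⊕ Fin (2^k)) (Fin (2^k) ⊕ Fin (2^k)) ℝ) :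
    Matrix.reindex (eqv k) (eqv k) M * Matrix.reindex (eqv k) (eqv k) N =
      Matrix.reindex (eqv k) (eqv k) (M * N) := by
  simp only [Matrix.reindex_apply]
  exact Matrix.submatrix_mul_equiv M N _ _ _

lemma JJ (k : ℕ) : Jmat k * Jmat k = ((2:ℝ)^k) • Jmat k := by
  ext i j
  simp [Jmat, Matrix.mul_apply]

theorem key (k : ℕ) :
    Cmat k * Dmat k = 1 ∧ Dmat k * Cmat k = 1 ∧
    Jmat k * Dmat k = ((2:ℝ)^k) • Jmat k ∧ Dmat k * Jmat k = ((2:ℝ)^k) • Jmat k ∧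
    Jmat k * Cmat k = (((2:ℝ)^k))⁻¹ • Jmat k ∧ Cmat k * Jmat k = (((2:ℝ)^k))⁻¹ • Jmat k := by
  induction k with
  | zero =>
    refine ⟨?_, ?_, ?_, ?_, ?_, ?_⟩ <;>
      · ext i j
        fin_cases i <;> fin_cases j <;>
          simp [Cmat, Dmat, Jmat, Matrix.mul_apply, Matrix.one_apply]
  | succ k ih =>
    obtain ⟨hCD, hDC, hJD, hDJ, hJC, hCJ⟩ := ih
    have hJJ := JJ k
    have hx : ((2:ℝ)^k) ≠ 0 := by positivity
    have hb : ((2:ℝ)^(2*k+1)) = 2 * 2^k * 2^k := by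
      rw [two_mul, pow_succ, pow_add]; ring
    have hre : ∀ (c : ℝ) (M : Matrix (Fin (2^k) ⊕ Fin (2^k)) (Fin (2^k) ⊕ Fin (2^k)) ℝ),
        c • Matrix.reindex (eqv k) (eqv k) M = Matrix.reindex (eqv k) (eqv k) (c • M) :=
      fun c M => rfl
    have hone : (1 : Matrix (Fin (2^(k+1))) (Fin (2^(k+1))) ℝ) =
        Matrix.reindex (eqv k) (eqv k) 1 := by
      simp [Matrix.reindex_apply, Matrix.submatrix_one_equiv]
    have hinj := (Matrix.reindex (eqv k) (eqv k) (α := ℝ)).injective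
    rw [Cmat_succ, Dmat, Jmat_succ]
    refine ⟨?_, ?_, ?_, ?_, ?_, ?_⟩ <;>
    · rw [reindex_mul]
      first
        | (rw [hone]; apply congrArg)
        | (rw [hre]; apply congrArg)
      rw [Matrix.fromBlocks_multiply]
      first
        | rw [← Matrix.fromBlocks_one]
        | rw [Matrix.fromBlocks_smul]
      rw [Matrix.fromBlocks_inj]
      refine ⟨?_, ?_, ?_, ?_⟩ <;>
      · simp only [Matrix.mul_add, Matrix.add_mul, Matrix.smul_mul, Matrix.mul_smul,
          hCD, hDC, hJD, hDJ, hJC, hCJ, hJJ, smul_smul, smul_add]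
        match_scalars <;> · try simp only [hb]
                            try field_simp
                            try ring

theorem Jmat_mul_Cmat_inv (k : ℕ) (hk : 1 ≤ k) :
    Jmat k * (Cmat k)⁻¹ = ((2:ℝ)^k) • Jmat k := by
  obtain ⟨hCD, hDC, hJD, _, _, _⟩ := key k
  rw [Matrix.inv_eq_right_inv hCD, hJD]
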